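/- Let f : ℝⁿ → ℝⁿ be Lipschitz with constant L ≥ 0, A : ℝⁿ → ℝⁿ a linear map, x₀ ∈ ℝⁿ, T > 0, M > 0 and p* ∈ ℝ. Then for every ε > 0 there exists δ > 0 such that: for every T₀ ∈ (0,δ), every measurable T₀-periodic function p : ℝ → ℝ with |p(t)| ≤ M for all t and mean value p*, every solution x of the switched system on [0,T] and every solution y of the averaged system (with parameter p*) on [0,T], one has sup_{t ∈ [0,T]} ‖x(t) − y(t)‖ ≤ ε; i.e., as the switching period tends to 0 the solution of the switched system approaches the solution of the averaged system uniformly on [0,T]. -/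

import Mathlib

/-!
Write `x t - y t = ∫₀ᵗ (F s (x s) - F s (y s)) ds + ∫₀ᵗ (p s - p*) • A (y s) ds`, where
`F s u = f u + p s • A u` is Lipschitz in `u` with constant `L + M ‖A‖`. The averaged solution
`y` is bounded and Lipschitz on `[0, T]`, so on each period `A ∘ y` is nearly constant and the
zero-mean weight `p - p*` kills its integral up to `O(T₀²)`; summing over the `≤ T / T₀` periods
makes the oscillatory term `O(T₀)`. Grönwall's inequality then gives `‖x t - y t‖ = O(T₀)`
uniformly on `[0, T]`.
-/

open Set MeasureTheory Function Topology
open scoped NNReal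

theorem MeasureTheory.IntegrableOn.intervalIntegrable_of_mem_Icc {E : Type*}
    [NormedAddCommGroup E] {f : ℝ → E} {a b t : ℝ} (hf : IntegrableOn f (Icc a b))
    (ht : t ∈ Icc a b) : IntervalIntegrable f volume a t :=
  (hf.mono_set (uIcc_subset_Icc (left_mem_Icc.2 (ht.1.trans ht.2)) ht)).intervalIntegrable

theorem MeasureTheory.LocallyIntegrable.intervalIntegrable {E : Type*} [NormedAddCommGroup E]
    {f : ℝ → E} (hf : LocallyIntegrable f) (a b : ℝ) : IntervalIntegrable f volume a b :=
  (hf.integrableOn_isCompact isCompact_uIcc).intervalIntegrable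

theorem Measurable.locallyIntegrable_of_abs_le {p : ℝ → ℝ} {M : ℝ} (hp : Measurable p)
    (hM : ∀ t, |p t| ≤ M) : LocallyIntegrable p :=
  (locallyIntegrable_const M).mono hp.aestronglyMeasurable
    (ae_of_all _ fun t => by simpa [abs_of_nonneg ((abs_nonneg _).trans (hM 0))] using hM t)

theorem le_mul_exp_of_le_add_mul_integral {φ : ℝ → ℝ} {η K a b : ℝ} (hK : 0 ≤ K)
    (hφ : ContinuousOn φ (Icc a b)) (h : ∀ t ∈ Icc a b, φ t ≤ η + K * ∫ s in a..t, φ s) :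
    ∀ t ∈ Icc a b, φ t ≤ η * Real.exp (K * (t - a)) := by
  set Ψ : ℝ → ℝ := fun t => η + K * ∫ s in a..t, φ s
  have hφ_int : ∀ t ∈ Icc a b, IntervalIntegrable φ volume a t := fun t ht =>
    hφ.integrableOn_Icc.intervalIntegrable_of_mem_Icc ht
  have hΨ_cont : ContinuousOn Ψ (Icc a b) := by
    rcases le_or_gt a b with hab | hab
    · have := intervalIntegral.continuousOn_primitive_interval'
        (hφ_int b (right_mem_Icc.2 hab)) left_mem_uIcc
      rw [uIcc_of_le hab] at this
      exact continuousOn_const.add (continuousOn_const.mul this)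
    · simp [Icc_eq_empty_of_lt hab]
  have hΨ_deriv : ∀ t ∈ Ico a b, HasDerivWithinAt Ψ (K * φ t) (Ici t) t := by
    intro t ht
    have hmem : Icc a b ∈ 𝓝[>] t := Icc_mem_nhdsGT_of_mem ht
    have := intervalIntegral.integral_hasDerivWithinAt_right (s := Ici t) (t := Ioi t)
      (hφ_int t (Ico_subset_Icc_self ht))
      ((hφ.stronglyMeasurableAtFilter_nhdsWithin measurableSet_Icc t).filter_mono
        (nhdsWithin_le_of_mem hmem))
      ((hφ t (Ico_subset_Icc_self ht)).mono_of_mem_nhdsWithin hmem)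
    exact (this.const_mul K).const_add η
  have hΨ_le := le_gronwallBound_of_liminf_deriv_right_le (δ := η) (K := K) (ε := 0) hΨ_cont
    (fun t ht _ hr => (hΨ_deriv t ht).liminf_right_slope_le hr) (by simp [Ψ])
    (fun t ht => by simpa using mul_le_mul_of_nonneg_left (h t (Ico_subset_Icc_self ht)) hK)
  intro t ht
  calc φ t ≤ Ψ t := h t ht
    _ ≤ gronwallBound η K 0 (t - a) := hΨ_le t ht
    _ = η * Real.exp (K * (t - a)) := gronwallBound_ε0 _ _ _

section Averaging

variable {E : Type*} [NormedAddCommGroup E] [NormedSpace ℝ E] [CompleteSpace E] {g : ℝ → ℝ}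
  {v : ℝ → E} {G : ℝ} {Λ : ℝ≥0}

theorem integral_sub_mean_eq_zero {p : ℝ → ℝ} {T₀ : ℝ} (hT₀ : T₀ ≠ 0)
    (hp : IntervalIntegrable p volume 0 T₀) :
    ∫ s in 0..T₀, (p s - 1 / T₀ * ∫ u in 0..T₀, p u) = 0 := by
  rw [intervalIntegral.integral_sub hp intervalIntegrable_const, intervalIntegral.integral_const,
    smul_eq_mul]
  field_simp
  ring

theorem norm_integral_smul_le_of_integral_eq_zero {a b : ℝ} (hab : a ≤ b)
    (hg : IntervalIntegrable g volume a b) (hg₀ : ∫ s in a..b, g s = 0) (hG : ∀ s, |g s| ≤ G)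
    (hv : LipschitzOnWith Λ v (Icc a b)) :
    ‖∫ s in a..b, g s • v s‖ ≤ G * Λ * (b - a) ^ 2 := by
  have hgv : IntervalIntegrable (fun s => g s • v s) volume a b :=
    hg.smul_continuousOn (by rw [uIcc_of_le hab]; exact hv.continuousOn)
  have hcentred : ∫ s in a..b, g s • v s = ∫ s in a..b, g s • (v s - v a) := by
    simp only [smul_sub]
    rw [intervalIntegral.integral_sub hgv (hg.smul_continuousOn continuousOn_const),
      intervalIntegral.integral_smul_const, hg₀, zero_smul, sub_zero]
  have hbound : ∀ s ∈ uIoc a b, ‖g s • (v s - v a)‖ ≤ G * (Λ * (b - a)) := by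
    intro s hs
    rw [uIoc_of_le hab] at hs
    rw [norm_smul, Real.norm_eq_abs]
    refine mul_le_mul (hG s) ?_ (norm_nonneg _) ((abs_nonneg _).trans (hG s))
    calc ‖v s - v a‖ ≤ Λ * ‖s - a‖ :=
          hv.norm_sub_le (Ioc_subset_Icc_self hs) (left_mem_Icc.2 hab)
      _ ≤ Λ * (b - a) := by
          rw [Real.norm_eq_abs, abs_of_pos (sub_pos.2 hs.1)]
          gcongr
          exact hs.2
  calc ‖∫ s in a..b, g s • v s‖ ≤ G * (Λ * (b - a)) * |b - a| := by
        rw [hcentred]; exact intervalIntegral.norm_integral_le_of_norm_le_const hbound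
    _ = G * Λ * (b - a) ^ 2 := by rw [abs_of_nonneg (sub_nonneg.2 hab)]; ring

variable {T₀ : ℝ} (hg : LocallyIntegrable g) (hper : Periodic g T₀)
  (hg₀ : ∫ s in 0..T₀, g s = 0) (hG : ∀ s, |g s| ≤ G)
include hg hper hg₀ hG

theorem norm_integral_smul_le_of_periodic_of_nat (hT₀ : 0 ≤ T₀) (N : ℕ)
    (hv : LipschitzOnWith Λ v (Icc 0 (N * T₀))) :
    ‖∫ s in 0..N * T₀, g s • v s‖ ≤ N * (G * Λ * T₀ ^ 2) := by
  induction N with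
  | zero => simp
  | succ N ih =>
    have hNT₀ : 0 ≤ N * T₀ := by positivity
    rw [show ((N + 1 : ℕ) : ℝ) * T₀ = N * T₀ + T₀ by push_cast; ring] at hv ⊢
    have hgv (a b : ℝ) (hab : uIcc a b ⊆ Icc 0 (N * T₀ + T₀)) :
        IntervalIntegrable (fun s => g s • v s) volume a b :=
      (hg.intervalIntegrable a b).smul_continuousOn (hv.continuousOn.mono hab)
    have hlast : ‖∫ s in N * T₀..N * T₀ + T₀, g s • v s‖ ≤ G * Λ * T₀ ^ 2 := by
      have h := norm_integral_smul_le_of_integral_eq_zero (by linarith) (hg.intervalIntegrable _ _)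
        (by rw [hper.intervalIntegral_add_eq _ 0, zero_add, hg₀]) hG
        (hv.mono (Icc_subset_Icc hNT₀ le_rfl))
      rwa [add_sub_cancel_left] at h
    have hle : Icc 0 (N * T₀) ⊆ Icc 0 (N * T₀ + T₀) := Icc_subset_Icc le_rfl (by linarith)
    rw [← intervalIntegral.integral_add_adjacent_intervals (hgv _ _ (by rwa [uIcc_of_le hNT₀]))
      (hgv _ _ (by rw [uIcc_of_le (by linarith)]; exact Icc_subset_Icc hNT₀ le_rfl))]
    calc _ ≤ _ := norm_add_le _ _
      _ ≤ N * (G * Λ * T₀ ^ 2) + G * Λ * T₀ ^ 2 := add_le_add (ih (hv.mono hle)) hlast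
      _ = ((N + 1 : ℕ) : ℝ) * (G * Λ * T₀ ^ 2) := by push_cast; ring

theorem norm_integral_smul_le_of_periodic (hT₀ : 0 < T₀) {T B : ℝ}
    (hv : LipschitzOnWith Λ v (Icc 0 T)) (hB : ∀ s ∈ Icc 0 T, ‖v s‖ ≤ B) {t : ℝ}
    (ht : t ∈ Icc 0 T) : ‖∫ s in 0..t, g s • v s‖ ≤ G * (Λ * T + B) * T₀ := by
  set N := ⌊t / T₀⌋₊
  have hNt : N * T₀ ≤ t := (le_div_iff₀ hT₀).1 (Nat.floor_le (div_nonneg ht.1 hT₀.le))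
  have htN : t - N * T₀ ≤ T₀ := by
    have := (div_lt_iff₀ hT₀).1 (Nat.lt_floor_add_one (t / T₀))
    linarith
  have hNT₀ : 0 ≤ N * T₀ := by positivity
  have hG₀ : 0 ≤ G := (abs_nonneg _).trans (hG 0)
  have hB₀ : 0 ≤ B := (norm_nonneg _).trans (hB t ht)
  have hgv (a b : ℝ) (hab : uIcc a b ⊆ Icc 0 T) :
      IntervalIntegrable (fun s => g s • v s) volume a b :=
    (hg.intervalIntegrable a b).smul_continuousOn (hv.continuousOn.mono hab)
  have hperiods := norm_integral_smul_le_of_periodic_of_nat hg hper hg₀ hG hT₀.le N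
    (hv.mono (Icc_subset_Icc le_rfl (hNt.trans ht.2)))
  have htail : ‖∫ s in N * T₀..t, g s • v s‖ ≤ G * B * T₀ := by
    refine (intervalIntegral.norm_integral_le_of_norm_le_const (C := G * B) fun s hs => ?_).trans ?_
    · rw [uIoc_of_le hNt] at hs
      rw [norm_smul, Real.norm_eq_abs]
      exact mul_le_mul (hG s) (hB s (Icc_subset_Icc hNT₀ ht.2 (Ioc_subset_Icc_self hs)))
        (norm_nonneg _) hG₀
    · rw [abs_of_nonneg (sub_nonneg.2 hNt)]
      gcongr
  rw [← intervalIntegral.integral_add_adjacent_intervals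
    (hgv _ _ (by rw [uIcc_of_le hNT₀]; exact Icc_subset_Icc le_rfl (hNt.trans ht.2)))
    (hgv _ _ (by rw [uIcc_of_le hNt]; exact Icc_subset_Icc hNT₀ ht.2))]
  calc _ ≤ _ := norm_add_le _ _
    _ ≤ N * (G * Λ * T₀ ^ 2) + G * B * T₀ := add_le_add hperiods htail
    _ = G * Λ * T₀ * (N * T₀) + G * B * T₀ := by ring
    _ ≤ G * Λ * T₀ * T + G * B * T₀ := by gcongr; exact hNt.trans ht.2
    _ = G * (Λ * T + B) * T₀ := by ring

end Averaging

theorem norm_le_mul_norm_add_of_norm_sub_le {E : Type*} [NormedAddCommGroup E] {K : ℝ}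
    {G : E → E} (hG : ∀ u v, ‖G u - G v‖ ≤ K * ‖u - v‖)
    (u : E) : ‖G u‖ ≤ K * ‖u‖ + ‖G 0‖ := by
  have := hG u 0
  rw [sub_zero] at this
  linarith [norm_le_norm_sub_add (G u) (G 0)]

section ODE

variable {E : Type*} [NormedAddCommGroup E] [NormedSpace ℝ E] {F : ℝ → E → E} {K T : ℝ}

theorem norm_sub_le_add_mul_integral [CompleteSpace E] (hF : ∀ s u v, ‖F s u - F s v‖ ≤ K * ‖u - v‖)
    {x y w : ℝ → E} (hx : ∀ s ∈ Icc 0 T, HasDerivAt x (F s (x s)) s)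
    (hy : ∀ s ∈ Icc 0 T, HasDerivAt y (F s (y s) - w s) s)
    (hxi : IntegrableOn (fun s => F s (x s)) (Icc 0 T))
    (hyi : IntegrableOn (fun s => F s (y s)) (Icc 0 T)) (hwi : IntegrableOn w (Icc 0 T))
    {t : ℝ} (ht : t ∈ Icc 0 T) :
    ‖x t - y t‖ ≤ ‖x 0 - y 0‖ + ‖∫ s in 0..t, w s‖ + K * ∫ s in 0..t, ‖x s - y s‖ := by
  have hsub : uIcc 0 t ⊆ Icc 0 T := uIcc_subset_Icc (left_mem_Icc.2 (ht.1.trans ht.2)) ht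
  have hxi' := hxi.intervalIntegrable_of_mem_Icc ht
  have hyi' := hyi.intervalIntegrable_of_mem_Icc ht
  have hwi' := hwi.intervalIntegrable_of_mem_Icc ht
  have hx_ftc := intervalIntegral.integral_eq_sub_of_hasDerivAt (fun s hs => hx s (hsub hs)) hxi'
  have hy_ftc := intervalIntegral.integral_eq_sub_of_hasDerivAt (fun s hs => hy s (hsub hs))
    (hyi'.sub hwi')
  rw [intervalIntegral.integral_sub hyi' hwi', sub_eq_iff_eq_add] at hy_ftc
  have hdiff : x t - y t = (x 0 - y 0) + (∫ s in 0..t, w s)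
      + ∫ s in 0..t, (F s (x s) - F s (y s)) := by
    rw [intervalIntegral.integral_sub hxi' hyi', hx_ftc, hy_ftc]
    abel
  have hcont : ContinuousOn (fun s => ‖x s - y s‖) (uIcc 0 t) :=
    ((HasDerivAt.continuousOn fun s hs => hx s (hsub hs)).sub
      (HasDerivAt.continuousOn fun s hs => hy s (hsub hs))).norm
  have hlip : ‖∫ s in 0..t, (F s (x s) - F s (y s))‖ ≤ K * ∫ s in 0..t, ‖x s - y s‖ := by
    rw [← intervalIntegral.integral_const_mul]
    exact intervalIntegral.norm_integral_le_of_norm_le ht.1 (ae_of_all _ fun s _ => hF s _ _)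
      (continuousOn_const.mul hcont).intervalIntegrable
  rw [hdiff]
  exact (norm_add_le _ _).trans (add_le_add (norm_add_le _ _) hlip)

variable {C : ℝ} (hK : 0 ≤ K) (hF : ∀ s u v, ‖F s u - F s v‖ ≤ K * ‖u - v‖)
  (hC : ∀ s, ‖F s 0‖ ≤ C) {u : ℝ → E} (hu : ∀ s ∈ Icc 0 T, HasDerivAt u (F s (u s)) s)
include hK hF hC hu

theorem norm_le_gronwallBound_of_hasDerivAt :
    ∀ t ∈ Icc 0 T, ‖u t‖ ≤ gronwallBound ‖u 0‖ K C T := by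
  intro t ht
  have hC₀ : 0 ≤ C := (norm_nonneg _).trans (hC 0)
  calc ‖u t‖ ≤ gronwallBound ‖u 0‖ K C (t - 0) :=
        norm_le_gronwallBound_of_norm_deriv_right_le
          (fun s hs => (hu s hs).continuousAt.continuousWithinAt)
          (fun s hs => (hu s (Ico_subset_Icc_self hs)).hasDerivWithinAt) le_rfl
          (fun s _ => (norm_le_mul_norm_add_of_norm_sub_le (hF s) _).trans (by linarith [hC s]))
          t ht
    _ ≤ gronwallBound ‖u 0‖ K C T :=
        gronwallBound_mono (norm_nonneg _) hC₀ hK (by linarith [ht.2])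

theorem lipschitzOnWith_of_hasDerivAt :
    LipschitzOnWith (K * gronwallBound ‖u 0‖ K C T + C).toNNReal u (Icc 0 T) := by
  refine LipschitzOnWith.of_dist_le' fun s hs r hr => ?_
  rw [dist_eq_norm, dist_eq_norm]
  refine (convex_Icc 0 T).norm_image_sub_le_of_norm_hasDerivWithin_le
    (fun s hs => (hu s hs).hasDerivWithinAt) (fun s hs => ?_) hr hs
  calc ‖F s (u s)‖ ≤ K * ‖u s‖ + C :=
        (norm_le_mul_norm_add_of_norm_sub_le (hF s) _).trans (by linarith [hC s])
    _ ≤ K * gronwallBound ‖u 0‖ K C T + C := by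
        gcongr; exact norm_le_gronwallBound_of_hasDerivAt hK hF hC hu s hs

end ODE

theorem norm_add_smul_sub_add_smul_le {E : Type*} [NormedAddCommGroup E] [NormedSpace ℝ E]
    {f : E → E} {Kf : ℝ≥0} (hf : LipschitzWith Kf f)
    (A : E →L[ℝ] E) {q M : ℝ} (hq : |q| ≤ M) (u v : E) :
    ‖(f u + q • A u) - (f v + q • A v)‖ ≤ (Kf + M * ‖A‖) * ‖u - v‖ := by
  calc ‖(f u + q • A u) - (f v + q • A v)‖ = ‖(f u - f v) + q • A (u - v)‖ := by
        rw [map_sub, smul_sub]; congr 1; abel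
    _ ≤ ‖f u - f v‖ + |q| * ‖A (u - v)‖ := by
        rw [← Real.norm_eq_abs, ← norm_smul]; exact norm_add_le _ _
    _ ≤ Kf * ‖u - v‖ + M * (‖A‖ * ‖u - v‖) :=
        add_le_add (hf.norm_sub_le u v)
          (mul_le_mul hq (A.le_opNorm _) (norm_nonneg _) ((abs_nonneg q).trans hq))
    _ = (Kf + M * ‖A‖) * ‖u - v‖ := by ring

theorem integrableOn_add_smul_comp {E : Type*} [NormedAddCommGroup E] [NormedSpace ℝ E]
    {f : E → E} (hf : Continuous f) (A : E →L[ℝ] E) {q : ℝ → ℝ} (hq : LocallyIntegrable q)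
    {u : ℝ → E} {a b : ℝ} (hu : ContinuousOn u (Icc a b)) :
    IntegrableOn (fun s => f (u s) + q s • A (u s)) (Icc a b) :=
  (hf.comp_continuousOn hu).integrableOn_Icc.add
    ((hq.integrableOn_isCompact isCompact_Icc).smul_continuousOn
      (A.continuous.comp_continuousOn hu) isCompact_Icc)

theorem exists_norm_integral_sub_mean_smul_le {E : Type*} [NormedAddCommGroup E]
    [NormedSpace ℝ E] [CompleteSpace E] {f : E → E} {Kf : ℝ≥0} (hf : LipschitzWith Kf f)
    (A : E →L[ℝ] E) (x₀ : E) (T M pstar : ℝ) :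
    ∃ Q : ℝ, ∀ T₀ > 0, ∀ p : ℝ → ℝ, Measurable p → Periodic p T₀ → (∀ t, |p t| ≤ M) →
      1 / T₀ * (∫ u in 0..T₀, p u) = pstar →
      ∀ y : ℝ → E, y 0 = x₀ → (∀ t ∈ Icc 0 T, HasDerivAt y (f (y t) + pstar • A (y t)) t) →
        ∀ t ∈ Icc 0 T, ‖∫ s in 0..t, (p s - pstar) • A (y s)‖ ≤ Q * T₀ := by
  set Ky : ℝ := Kf + |pstar| * ‖A‖
  set R := gronwallBound ‖x₀‖ Ky ‖f 0‖ T
  refine ⟨(M + |pstar|) * (‖A‖₊ * (Ky * R + ‖f 0‖).toNNReal * T + ‖A‖ * R),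
    fun T₀ hT₀ p hp hper hpM hmean y hy0 hy t ht => ?_⟩
  have hp_loc := hp.locallyIntegrable_of_abs_le hpM
  have hF : ∀ (_ : ℝ) u v, ‖(f u + pstar • A u) - (f v + pstar • A v)‖ ≤ Ky * ‖u - v‖ :=
    fun _ => norm_add_smul_sub_add_smul_le hf A le_rfl
  have hC : ∀ _ : ℝ, ‖f 0 + pstar • A 0‖ ≤ ‖f 0‖ := by simp
  have hy_bound := norm_le_gronwallBound_of_hasDerivAt (F := fun _ u => f u + pstar • A u)
    (by positivity) hF hC hy
  have hy_lip := lipschitzOnWith_of_hasDerivAt (by positivity) hF hC hy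
  rw [hy0] at hy_bound hy_lip
  exact norm_integral_smul_le_of_periodic (g := fun s => p s - pstar)
    (hp_loc.sub (locallyIntegrable_const _))
    (fun s => by simp only [hper s])
    (hmean ▸ integral_sub_mean_eq_zero hT₀.ne' (hp_loc.intervalIntegrable _ _))
    (fun s => (abs_sub _ _).trans (add_le_add (hpM s) le_rfl)) hT₀
    (A.lipschitz.comp_lipschitzOnWith hy_lip)
    (fun s hs => (A.le_opNorm _).trans (by gcongr; exact hy_bound s hs)) ht

theorem exists_norm_switched_sub_averaged_le {E : Type*} [NormedAddCommGroup E]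
    [NormedSpace ℝ E] [CompleteSpace E] {f : E → E} {Kf : ℝ≥0} (hf : LipschitzWith Kf f)
    (A : E →L[ℝ] E) (x₀ : E) (T M pstar : ℝ) :
    ∃ C : ℝ, ∀ T₀ > 0, ∀ p : ℝ → ℝ, Measurable p → Periodic p T₀ → (∀ t, |p t| ≤ M) →
      1 / T₀ * (∫ u in 0..T₀, p u) = pstar →
      ∀ x y : ℝ → E, x 0 = x₀ → (∀ t ∈ Icc 0 T, HasDerivAt x (f (x t) + p t • A (x t)) t) →
        y 0 = x₀ → (∀ t ∈ Icc 0 T, HasDerivAt y (f (y t) + pstar • A (y t)) t) →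
        ∀ t ∈ Icc 0 T, ‖x t - y t‖ ≤ C * T₀ := by
  obtain ⟨Q, hQ⟩ := exists_norm_integral_sub_mean_smul_le hf A x₀ T M pstar
  set K : ℝ := Kf + M * ‖A‖
  refine ⟨Q * Real.exp (K * T), fun T₀ hT₀ p hp hper hpM hmean x y hx0 hx hy0 hy t ht => ?_⟩
  have hw := hQ T₀ hT₀ p hp hper hpM hmean y hy0 hy
  have hp_loc := hp.locallyIntegrable_of_abs_le hpM
  have hg_loc := hp_loc.sub (locallyIntegrable_const pstar)
  have hxc : ContinuousOn x (Icc 0 T) := HasDerivAt.continuousOn hx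
  have hyc : ContinuousOn y (Icc 0 T) := HasDerivAt.continuousOn hy
  have hcomp : ∀ s ∈ Icc 0 T, ‖x s - y s‖ ≤ Q * T₀ + K * ∫ r in 0..s, ‖x r - y r‖ := by
    intro s hs
    have := norm_sub_le_add_mul_integral (F := fun r u => f u + p r • A u)
      (w := fun r => (p r - pstar) • A (y r)) (fun r => norm_add_smul_sub_add_smul_le hf A (hpM r))
      hx (fun r hr => (hy r hr).congr_deriv (by simp only [sub_smul]; abel))
      (integrableOn_add_smul_comp hf.continuous A hp_loc hxc)
      (integrableOn_add_smul_comp hf.continuous A hp_loc hyc)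
      ((hg_loc.integrableOn_isCompact isCompact_Icc).smul_continuousOn
        (A.continuous.comp_continuousOn hyc) isCompact_Icc) hs
    rw [hx0, hy0, sub_self, norm_zero, zero_add] at this
    exact this.trans (by gcongr; exact hw s hs)
  have hK : 0 ≤ K := by have := (abs_nonneg _).trans (hpM 0); positivity
  have hQ₀ : 0 ≤ Q := nonneg_of_mul_nonneg_left ((norm_nonneg _).trans (hw t ht)) hT₀
  calc ‖x t - y t‖ ≤ Q * T₀ * Real.exp (K * (t - 0)) :=
        le_mul_exp_of_le_add_mul_integral hK (hxc.sub hyc).norm hcomp t ht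
    _ ≤ Q * Real.exp (K * T) * T₀ := by
        rw [mul_right_comm]; gcongr; linarith [ht.2]

theorem ps_switched_approaches_averaged_general
    {n : ℕ} (f : EuclideanSpace ℝ (Fin n) → EuclideanSpace ℝ (Fin n))
    (L : ℝ) (hf : LipschitzWith L.toNNReal f)
    (A : EuclideanSpace ℝ (Fin n) →ₗ[ℝ] EuclideanSpace ℝ (Fin n))
    (x₀ : EuclideanSpace ℝ (Fin n)) (T M : ℝ) (pstar : ℝ) :
    ∀ ε > 0, ∃ δ > 0, ∀ T₀ : ℝ, T₀ ∈ Set.Ioo (0 : ℝ) δ →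
      ∀ p : ℝ → ℝ, Measurable p →
        (∀ t : ℝ, p (t + T₀) = p t) →
        (∀ t : ℝ, |p t| ≤ M) →
        (1 / T₀) * (∫ u in (0 : ℝ)..T₀, p u) = pstar →
        ∀ x y : ℝ → EuclideanSpace ℝ (Fin n),
          x 0 = x₀ →
          (∀ t ∈ Set.Icc (0 : ℝ) T, HasDerivAt x (f (x t) + p t • A (x t)) t) →
          y 0 = x₀ →
          (∀ t ∈ Set.Icc (0 : ℝ) T, HasDerivAt y (f (y t) + pstar • A (y t)) t) →
          ∀ t ∈ Set.Icc (0 : ℝ) T, ‖x t - y t‖ ≤ ε := by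
  intro ε hε
  obtain ⟨C, hC⟩ :=
    exists_norm_switched_sub_averaged_le hf (LinearMap.toContinuousLinearMap A) x₀ T M pstar
  refine ⟨ε / (|C| + 1), by positivity, fun T₀ hT₀ p hp hper hpM hmean x y hx0 hx hy0 hy t ht => ?_⟩
  have hT₀ε : (|C| + 1) * T₀ < ε := (lt_div_iff₀' (by positivity)).1 hT₀.2
  calc ‖x t - y t‖ ≤ C * T₀ := hC T₀ hT₀.1 p hp hper hpM hmean x y hx0 hx hy0 hy t ht
    _ ≤ ε := by nlinarith [le_abs_self C, hT₀.1]

/-- Theorem 1 of the paper: as the switching period `T₀` tends to `0`,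
the solution of the switched system approaches the solution of the averaged system
uniformly on `[0, T]`. -/
theorem ps_switched_approaches_averaged
    {n : ℕ} (f : EuclideanSpace ℝ (Fin n) → EuclideanSpace ℝ (Fin n))
    (L : ℝ) (hL : 0 ≤ L) (hf : LipschitzWith L.toNNReal f)
    (A : EuclideanSpace ℝ (Fin n) →ₗ[ℝ] EuclideanSpace ℝ (Fin n))
    (x₀ : EuclideanSpace ℝ (Fin n)) (T M : ℝ) (hT : 0 < T) (hM : 0 < M) (pstar : ℝ) :
    ∀ ε > 0, ∃ δ > 0, ∀ T₀ : ℝ, T₀ ∈ Set.Ioo (0 : ℝ) δ →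
      ∀ p : ℝ → ℝ, Measurable p →
        (∀ t : ℝ, p (t + T₀) = p t) →
        (∀ t : ℝ, |p t| ≤ M) →
        (1 / T₀) * (∫ u in (0 : ℝ)..T₀, p u) = pstar →
        ∀ x y : ℝ → EuclideanSpace ℝ (Fin n),
          x 0 = x₀ →
          (∀ t ∈ Set.Icc (0 : ℝ) T, HasDerivAt x (f (x t) + p t • A (x t)) t) →
          y 0 = x₀ →
          (∀ t ∈ Set.Icc (0 : ℝ) T, HasDerivAt y (f (y t) + pstar • A (y t)) t) →
          ∀ t ∈ Set.Icc (0 : ℝ) T, ‖x t - y t‖ ≤ ε :=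
  ps_switched_approaches_averaged_general f L hf A x₀ T M pstar
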